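/- arXiv:2012.10994 — 6 statements merged into one kernel-verified Lean document; each statement's English description precedes it below -/
import Mathlib

section
/- For n ≥ 1, 2^n + S(n+1,3) + n·S(n,3) = (3^n + 3^{n−1} n − 2^n n + n + 1)/2, where S denotes the Stirling number of the second kind. -/
/-- Stirling numbers of the second kind. -/
def stirling : ℕ → ℕ → ℕ
  | 0, 0 => 1
  | 0, _ + 1 => 0
  | _ + 1, 0 => 0
  | n + 1, k + 1 => (k + 1) * stirling n (k + 1) + stirling n k

lemma stirling_one (m : ℕ) : stirling (m + 1) 1 = 1 := by
  induction m with
  | zero => rfl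
  | succ k ih =>
    show 1 * stirling (k + 1) 1 + stirling (k + 1) 0 = 1
    rw [ih]; rfl

lemma stirling_two (m : ℕ) : (stirling (m + 1) 2 : ℚ) = 2 ^ m - 1 := by
  induction m with
  | zero => norm_num [stirling]
  | succ k ih =>
    show ((2 * stirling (k + 1) 2 + stirling (k + 1) 1 : ℕ) : ℚ) = _
    push_cast [stirling_one, ih]
    ring

lemma stirling_three (m : ℕ) :
    (stirling (m + 1) 3 : ℚ) = (3 ^ m - 2 ^ (m + 1) + 1) / 2 := by
  induction m with
  | zero => norm_num [stirling]
  | succ k ih =>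
    show ((3 * stirling (k + 1) 3 + stirling (k + 1) 2 : ℕ) : ℚ) = _
    push_cast [stirling_two, ih]
    ring

/-- For `n ≥ 1`,
`2^n + S(n+1,3) + n·S(n,3) = (3^n + 3^{n−1} n − 2^n n + n + 1)/2`. -/
theorem codim_D3_degenerate (n : ℕ) (hn : 1 ≤ n) :
    (2 : ℚ) ^ n + (stirling (n + 1) 3 : ℚ) + (n : ℚ) * (stirling n 3 : ℚ) =
      ((3 : ℚ) ^ n + (3 : ℚ) ^ (n - 1) * n - 2 ^ n * n + n + 1) / 2 := by
  obtain ⟨m, rfl⟩ := Nat.exists_eq_add_of_le hn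
  rw [show 1 + m = m + 1 by ring] at *
  rw [stirling_three (m + 1), stirling_three m]
  simp only [Nat.add_sub_cancel]
  push_cast
  ring
end

section
/- For the algebra C_2 of matrices of the form [[a, b],[0, a]] over F with trace t_{0,1}([[a,b],[0,a]]) = b, the polynomial h_3(x_1,x_2,x_3) = −Tr(x_1x_2)x_3 − Tr(x_1x_3)x_2 − Tr(x_2x_3)x_1 + Tr(x_1x_2x_3)·1 + Tr(x_1)x_2x_3 + Tr(x_2)x_1x_3 + Tr(x_3)x_1x_2 vanishes identically; that is, for all a_1, a_2, a_3 ∈ C_2, h_3(a_1, a_2, a_3) = 0. -/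
/-- The polynomial `h_3` is a trace identity of
`C_2 = {[[a,b],[0,a]]}` with the strange trace `t_{0,1}([[a,b],[0,a]]) = b`. -/
theorem C2_t01_h3 (F : Type*) [Field F] [CharZero F] (a b : Fin 3 → F) :
    let m : Fin 3 → Matrix (Fin 2) (Fin 2) F := fun i => !![a i, b i; 0, a i];
    let t : Matrix (Fin 2) (Fin 2) F → F := fun x => x 0 1;
    -(t (m 0 * m 1)) • m 2 - t (m 0 * m 2) • m 1 - t (m 1 * m 2) • m 0
      + t (m 0 * m 1 * m 2) • (1 : Matrix (Fin 2) (Fin 2) F)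
      + t (m 0) • (m 1 * m 2) + t (m 1) • (m 0 * m 2)
      + t (m 2) • (m 0 * m 1) = 0 := by
  intro m t
  ext i j
  fin_cases i <;> fin_cases j <;>
    simp [m, t, Matrix.mul_apply, Fin.sum_univ_succ, Matrix.one_apply] <;> ring
end

section
/- For the algebra C_2 of 2×2 matrices [[a,b],[0,a]] over F with trace t_{0,1} = b, the polynomial h_2(x_1,x_2,x_3) = Tr(x_1)Tr(x_2)x_3 − Tr(x_2)Tr(x_3)x_1 + Tr(x_1x_2)Tr(x_3)·1 − Tr(x_2x_3)Tr(x_1)·1 vanishes for all substitutions x_i ∈ C_2. -/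
/-- The polynomial `h_2` is a trace identity of
`C_2 = {[[a,b],[0,a]]}` with the strange trace `t_{0,1}([[a,b],[0,a]]) = b`. -/
theorem C2_t01_h2 (F : Type*) [Field F] [CharZero F] (a b : Fin 3 → F) :
    let m : Fin 3 → Matrix (Fin 2) (Fin 2) F := fun i => !![a i, b i; 0, a i]
    let t : Matrix (Fin 2) (Fin 2) F → F := fun x => x 0 1
    (t (m 0) * t (m 1)) • m 2 - (t (m 1) * t (m 2)) • m 0
      + (t (m 0 * m 1) * t (m 2)) • (1 : Matrix (Fin 2) (Fin 2) F)
      - (t (m 1 * m 2) * t (m 0)) • (1 : Matrix (Fin 2) (Fin 2) F) = 0 := by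
  intro m t
  ext i j
  fin_cases i <;> fin_cases j <;>
    simp [m, t, Matrix.mul_apply, Fin.sum_univ_two, Matrix.one_apply] <;> ring
end

section
/- For the algebra C_2 = {[[a,b],[0,a]]} with trace t_{α,1}([[a,b],[0,a]]) = αa + b, the polynomial h_5(x_1,x_2,x_3) = −Tr(x_1x_2)x_3 − Tr(x_1x_3)x_2 − Tr(x_2x_3)x_1 + Tr(x_1x_2x_3)·1 + Tr(x_1)x_2x_3 + Tr(x_2)x_1x_3 + Tr(x_3)x_1x_2 − α x_1x_2x_3 vanishes for all substitutions from C_2. -/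
/-- The polynomial `h_5` is a trace identity of `C_2 = {[[a,b],[0,a]]}` with
the strange trace `t_{α,1}([[a,b],[0,a]]) = α a + b`. -/
theorem C2_ta1_h5 (F : Type*) [Field F] [CharZero F] (α : F) (a b : Fin 3 → F) :
    let m : Fin 3 → Matrix (Fin 2) (Fin 2) F := fun i => !![a i, b i; 0, a i];
    let t : Matrix (Fin 2) (Fin 2) F → F := fun x => α * x 0 0 + x 0 1;
    -(t (m 0 * m 1)) • m 2 - t (m 0 * m 2) • m 1 - t (m 1 * m 2) • m 0
      + t (m 0 * m 1 * m 2) • (1 : Matrix (Fin 2) (Fin 2) F)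
      + t (m 0) • (m 1 * m 2) + t (m 1) • (m 0 * m 2)
      + t (m 2) • (m 0 * m 1)
      - α • (m 0 * m 1 * m 2) = 0 := by
  intro m t
  simp only [m, t]
  ext i j
  fin_cases i <;> fin_cases j <;>
    simp [Matrix.mul_apply, Fin.sum_univ_succ, Matrix.one_apply] <;> ring
end

section
/- For the algebra D_3 of 3×3 diagonal matrices with trace t_{α,α,0}(diag(a,b,c)) = α(a+b), the polynomial g_3 = Tr(x_1)Tr(x_2)Tr(x_3) + 2α²Tr(x_1x_2x_3) − αTr(x_1)Tr(x_2x_3) − αTr(x_2)Tr(x_1x_3) − αTr(x_1x_2)Tr(x_3) vanishes for all substitutions of diagonal 3×3 matrices. -/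
/-- The pure trace polynomial `g_3` is a trace identity of the algebra `D_3`
of diagonal `3 × 3` matrices with the degenerate trace
`t_{α,α,0}(diag(a,b,c)) = α(a+b)`. -/
theorem D3_taa0_g3 (F : Type*) [Field F] [CharZero F] (α : F) (hα : α ≠ 0)
    (T : Matrix (Fin 3) (Fin 3) F → F)
    (hT : ∀ m : Matrix (Fin 3) (Fin 3) F, T m = α * m 0 0 + α * m 1 1)
    (x y z : Matrix (Fin 3) (Fin 3) F)
    (hx : x.IsDiag) (hy : y.IsDiag) (hz : z.IsDiag) :
    T x * T y * T z + 2 * α ^ 2 * T (x * y * z)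
      - α * T x * T (y * z) - α * T y * T (x * z)
      - α * T (x * y) * T z = 0 := by
  have h01 : (0 : Fin 3) ≠ 1 := by decide
  have h10 : (1 : Fin 3) ≠ 0 := by decide
  have h02 : (0 : Fin 3) ≠ 2 := by decide
  have h12 : (1 : Fin 3) ≠ 2 := by decide
  have h20 : (2 : Fin 3) ≠ 0 := by decide
  have h21 : (2 : Fin 3) ≠ 1 := by decide
  simp only [hT, Matrix.mul_apply, Fin.sum_univ_three,
    hx h01, hx h10, hx h02, hx h12, hx h20, hx h21,
    hy h01, hy h10, hy h02, hy h12, hy h20, hy h21,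
    hz h01, hz h10, hz h02, hz h12, hz h20, hz h21,
    mul_zero, zero_mul, add_zero, zero_add]
  ring
end

section
/- Let D_2 be the algebra of 2×2 diagonal matrices with trace t_{α,α}(diag(a,b)) = α(a+b), α ≠ 0, and let f(x_1,x_2) = Tr(x_1)Tr(x_2)·1 + α²x_1x_2 + α²x_2x_1 − αTr(x_1)x_2 − αTr(x_2)x_1 − αTr(x_1x_2)·1. If A = F·1 + J is a commutative unital trace algebra with tr(J) = 0 on which f vanishes identically, then tr(1_A) ∈ {α, 2α}; and if moreover J ≠ 0, then tr(1_A) = 2α and J² = 0. -/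
section Aux

variable {F A : Type*} [Field F] [CharZero F] [CommRing A] [Algebra F A]
  [Nontrivial A]

private lemma smul_one_eq_zero' {s : F} (h : s • (1 : A) = 0) : s = 0 := by
  have := (algebraMap F A).injective
  apply this
  rw [map_zero, Algebra.algebraMap_eq_smul_one, h]

private lemma one_not_mem_of_nil {J : Ideal A} (hnil : ∃ m : ℕ, J ^ m = ⊥) :
    (1 : A) ∉ J := by
  intro h1
  obtain ⟨m, hm⟩ := hnil
  have : (1 : A) ∈ J ^ m := by
    have := Ideal.pow_mem_pow h1 m
    simpa using this
  rw [hm] at this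
  exact one_ne_zero (Ideal.mem_bot.mp this)

end Aux

/-- If `A = F·1 + J` is a commutative unital trace algebra with `tr(J) = 0`,
`J` nilpotent, on which the generating trace identity `f` of
`D_2^{t_{α,α}}` vanishes identically, then `tr(1) ∈ {α, 2α}`; and if
moreover `J ≠ 0`, then `tr(1) = 2α` and `J² = 0`. -/
theorem subvarieties_D2_taa (F A : Type*) [Field F] [CharZero F]
    [CommRing A] [Algebra F A] [Nontrivial A] (α : F) (hα : α ≠ 0)
    (J : Ideal A) (hnil : ∃ m : ℕ, J ^ m = ⊥)
    (hspan : ∀ x : A, ∃ a : F, ∃ j ∈ J, x = a • (1 : A) + j)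
    (tr : A →ₗ[F] F) (htrJ : ∀ j ∈ J, tr j = 0)
    (hf : ∀ u v : A,
      (tr u * tr v) • (1 : A) + α ^ 2 • (u * v) + α ^ 2 • (v * u)
        - α • (tr u • v) - α • (tr v • u)
        - (α * tr (u * v)) • (1 : A) = 0) :
    (tr 1 = α ∨ tr 1 = 2 * α) ∧
    (J ≠ ⊥ → tr 1 = 2 * α ∧ J ^ 2 = ⊥) := by
  set t := tr 1 with ht
  -- quadratic equation for t
  have key := hf 1 1
  rw [mul_one] at key
  have h11 : (t * t + α ^ 2 + α ^ 2 - α * t - α * t - α * t) • (1 : A) = 0 := by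
    linear_combination (norm := module) key
  have hq : (t - α) * (t - 2 * α) = 0 := by
    have := smul_one_eq_zero' h11
    linear_combination this
  have halt : t = α ∨ t = 2 * α := by
    rcases mul_eq_zero.mp hq with h | h
    · exact Or.inl (sub_eq_zero.mp h)
    · exact Or.inr (sub_eq_zero.mp h)
  refine ⟨halt, fun hJ => ?_⟩
  obtain ⟨j, hjJ, hj0⟩ := Submodule.exists_mem_ne_zero_of_ne_bot hJ
  -- tr 1 = 2α
  have h1j := hf 1 j
  rw [one_mul, mul_one, htrJ j hjJ, ← ht] at h1j
  have ht2 : t = 2 * α := by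
    rcases halt with h | h
    · exfalso
      rw [h] at h1j
      have : (α ^ 2) • j = 0 := by
        linear_combination (norm := module) h1j
      rcases smul_eq_zero.mp this with h' | h'
      · exact hα (pow_eq_zero_iff (n := 2) (by norm_num) |>.mp h')
      · exact hj0 h'
    · exact h
  refine ⟨ht2, ?_⟩
  -- J² = 0
  have hmul : ∀ x ∈ J, ∀ y ∈ J, x * y = 0 := by
    intro x hx y hy
    have hxy := hf x y
    rw [htrJ x hx, htrJ y hy, mul_comm y x] at hxy
    set c : F := ((2 : F) * α ^ 2)⁻¹ * (α * tr (x * y)) with hc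
    have hxyc : x * y = c • (1 : A) := by
      have h2 : ((2 : F) * α ^ 2) • (x * y) = (α * tr (x * y)) • (1 : A) := by
        linear_combination (norm := module) hxy
      have h2ne : (2 : F) * α ^ 2 ≠ 0 := by
        simp [hα]
      calc x * y = (((2 : F) * α ^ 2)⁻¹ * ((2 : F) * α ^ 2)) • (x * y) := by
            rw [inv_mul_cancel₀ h2ne, one_smul]
        _ = c • (1 : A) := by rw [← smul_smul, h2, smul_smul, hc]
    by_cases hc0 : c = 0
    · rw [hxyc, hc0, zero_smul]
    · exfalso
      apply one_not_mem_of_nil hnil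
      have hmem : x * y ∈ J := Ideal.mul_mem_left J x hy
      have : c⁻¹ • (x * y) ∈ J := by
        rw [Algebra.smul_def]
        exact Ideal.mul_mem_left J _ hmem
      rwa [hxyc, smul_smul, inv_mul_cancel₀ hc0, one_smul] at this
  rw [pow_two, eq_bot_iff]
  exact Ideal.mul_le.mpr fun x hx y hy => Ideal.mem_bot.mpr (hmul x hx y hy)
end
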